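/- (Alexandrov's lemma, Euclidean case) Let p, x, y, z be distinct points in a metric space with z lying strictly between x and y on a geodesic, i.e., dist(x,z) + dist(z,y) = dist(x,y) with z ≠ x, y. Then the Euclidean model angles satisfy ∠̃(p; x, y) ≥ ∠̃(p; x, z) + ∠̃(p; z, y), where ∠̃(p; a, b) denotes the angle at the vertex corresponding to p in the Euclidean comparison triangle with side lengths dist(p,a), dist(p,b), dist(a,b). -/

import Mathlib

/-- The Euclidean model angle at the vertex opposite the side of length `c`, in a
triangle with side lengths `a`, `b`, `c` adjacent to that vertex. -/
noncomputable def modAngle (a b c : ℝ) : ℝ :=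
  Real.arccos ((a ^ 2 + b ^ 2 - c ^ 2) / (2 * a * b))

lemma my_arccos_le_arccos {x y : ℝ} (h : x ≤ y) : Real.arccos y ≤ Real.arccos x := by
  unfold Real.arccos
  have := Real.monotone_arcsin h
  linarith

set_option maxHeartbeats 1000000 in
lemma alexandrov_key (a b c s t : ℝ) (ha : 0 < a) (hb : 0 < b) (hc : 0 < c)
    (hs : 0 < s) (ht : 0 < t)
    (h1 : s ≤ a + c) (h2 : a ≤ s + c) (h3 : c ≤ a + s)
    (h4 : t ≤ b + c) (h5 : b ≤ t + c) (h6 : c ≤ b + t)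
    (h7 : s + t ≤ a + b) :
    modAngle a c s + modAngle c b t ≤ modAngle a b (s + t) := by
  set qa : ℝ := (a ^ 2 + c ^ 2 - s ^ 2) / (2 * a * c) with hqa_def
  set qb : ℝ := (c ^ 2 + b ^ 2 - t ^ 2) / (2 * c * b) with hqb_def
  set q : ℝ := (a ^ 2 + b ^ 2 - (s + t) ^ 2) / (2 * a * b) with hq_def
  have hqa1 : qa ≤ 1 := by
    rw [hqa_def, div_le_one (by positivity)]; nlinarith
  have hqa1' : -1 ≤ qa := by
    rw [hqa_def, le_div_iff₀ (by positivity)]; nlinarith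
  have hqb1 : qb ≤ 1 := by
    rw [hqb_def, div_le_one (by positivity)]; nlinarith
  have hqb1' : -1 ≤ qb := by
    rw [hqb_def, le_div_iff₀ (by positivity)]; nlinarith
  have hq1' : -1 ≤ q := by
    rw [hq_def, le_div_iff₀ (by positivity)]; nlinarith
  set α : ℝ := Real.arccos qa with hα_def
  set β : ℝ := Real.arccos qb with hβ_def
  have hcosα : Real.cos α = qa := Real.cos_arccos hqa1' hqa1
  have hcosβ : Real.cos β = qb := Real.cos_arccos hqb1' hqb1
  have hα0 : 0 ≤ α := Real.arccos_nonneg _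
  have hβ0 : 0 ≤ β := Real.arccos_nonneg _
  -- Sum of angles ≤ π
  have hsum : qb ≥ -qa := by
    rw [ge_iff_le, hqa_def, hqb_def, ← neg_div, div_le_div_iff₀ (by positivity) (by positivity)]
    nlinarith [mul_nonneg (mul_nonneg (mul_nonneg hc.le hb.le) (by linarith : (0:ℝ) ≤ a + c - s)) (by linarith : (0:ℝ) ≤ c + s - a),
      mul_nonneg (mul_nonneg (mul_nonneg hc.le ha.le) (by linarith : (0:ℝ) ≤ b + c - t)) (by linarith : (0:ℝ) ≤ c + t - b),
      mul_nonneg (mul_nonneg (mul_nonneg hc.le ha.le) hb.le) (by linarith : (0:ℝ) ≤ a + b - s - t)]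
  have hαβπ : α + β ≤ Real.pi := by
    have : β ≤ Real.arccos (-qa) := my_arccos_le_arccos hsum
    rw [Real.arccos_neg, ← hα_def] at this
    linarith
  -- Comparison points in ℂ
  set Z : ℂ := (c * Real.cos α : ℝ) + (c * Real.sin α : ℝ) * Complex.I with hZ
  set Y : ℂ := (b * Real.cos (α + β) : ℝ) + (b * Real.sin (α + β) : ℝ) * Complex.I with hY
  set Xp : ℂ := (a : ℂ) with hX
  have pyth_α := Real.sin_sq_add_cos_sq α
  have pyth_β := Real.sin_sq_add_cos_sq β
  have habsXZ : ‖Xp - Z‖ = s := by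
    have hn : Complex.normSq (Xp - Z) = s ^ 2 := by
      simp only [hX, hZ, Complex.normSq_apply, Complex.sub_re, Complex.sub_im,
        Complex.add_re, Complex.add_im, Complex.mul_re, Complex.mul_im,
        Complex.I_re, Complex.I_im, Complex.ofReal_re, Complex.ofReal_im]
      have h2ac : 2 * a * c * Real.cos α = a ^ 2 + c ^ 2 - s ^ 2 := by
        rw [hcosα, hqa_def]; field_simp
      linear_combination c ^ 2 * pyth_α - h2ac
    rw [Complex.norm_def, hn, Real.sqrt_sq hs.le]
  have habsZY : ‖Z - Y‖ = t := by
    have hn : Complex.normSq (Z - Y) = t ^ 2 := by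
      simp only [hZ, hY, Complex.normSq_apply, Complex.sub_re, Complex.sub_im,
        Complex.add_re, Complex.add_im, Complex.mul_re, Complex.mul_im,
        Complex.I_re, Complex.I_im, Complex.ofReal_re, Complex.ofReal_im]
      have h2cb : 2 * c * b * Real.cos β = c ^ 2 + b ^ 2 - t ^ 2 := by
        rw [hcosβ, hqb_def]; field_simp
      have hca : Real.cos (α + β) = Real.cos α * Real.cos β - Real.sin α * Real.sin β :=
        Real.cos_add α β
      have hsa : Real.sin (α + β) = Real.sin α * Real.cos β + Real.cos α * Real.sin β :=
        Real.sin_add α β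
      rw [hca, hsa]
      linear_combination (c ^ 2 + b ^ 2 - 2 * c * b * Real.cos β) * pyth_α
        + b ^ 2 * (Real.sin α ^ 2 + Real.cos α ^ 2) * pyth_β - h2cb
    rw [Complex.norm_def, hn, Real.sqrt_sq ht.le]
  have hnXY : Complex.normSq (Xp - Y) = a ^ 2 + b ^ 2 - 2 * a * b * Real.cos (α + β) := by
    simp only [hX, hY, Complex.normSq_apply, Complex.sub_re, Complex.sub_im,
      Complex.add_re, Complex.add_im, Complex.mul_re, Complex.mul_im,
      Complex.I_re, Complex.I_im, Complex.ofReal_re, Complex.ofReal_im]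
    linear_combination b ^ 2 * Real.sin_sq_add_cos_sq (α + β)
  have htri : ‖Xp - Y‖ ≤ s + t := by
    calc ‖Xp - Y‖ = ‖(Xp - Z) + (Z - Y)‖ := by ring_nf
      _ ≤ ‖Xp - Z‖ + ‖Z - Y‖ := norm_add_le _ _
      _ = s + t := by rw [habsXZ, habsZY]
  have hsq : a ^ 2 + b ^ 2 - 2 * a * b * Real.cos (α + β) ≤ (s + t) ^ 2 := by
    have := pow_le_pow_left₀ (norm_nonneg (Xp - Y)) htri 2
    rw [← Complex.sq_norm, hnXY] at *
    linarith [this]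
  have hcos_ge : q ≤ Real.cos (α + β) := by
    rw [hq_def, div_le_iff₀ (by positivity)]; nlinarith
  -- conclude
  have : α + β = Real.arccos (Real.cos (α + β)) :=
    (Real.arccos_cos (by linarith) hαβπ).symm
  calc modAngle a c s + modAngle c b t = α + β := rfl
    _ = Real.arccos (Real.cos (α + β)) := this
    _ ≤ Real.arccos q := my_arccos_le_arccos hcos_ge
    _ = modAngle a b (s + t) := rfl

/-- Alexandrov's lemma (Euclidean case): if `z` lies strictly between `x` and `y` on a
geodesic, then `∠̃(p;x,y) ≥ ∠̃(p;x,z) + ∠̃(p;z,y)`. -/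
theorem stmt_5 {X : Type*} [MetricSpace X] (p x y z : X)
    (hpx : p ≠ x) (hpy : p ≠ y) (hpz : p ≠ z)
    (hzx : z ≠ x) (hzy : z ≠ y) (hxy : x ≠ y)
    (hbetween : dist x z + dist z y = dist x y) :
    modAngle (dist p x) (dist p z) (dist x z)
      + modAngle (dist p z) (dist p y) (dist z y)
      ≤ modAngle (dist p x) (dist p y) (dist x y) := by
  rw [← hbetween]
  apply alexandrov_key
  · exact dist_pos.2 hpx
  · exact dist_pos.2 hpy
  · exact dist_pos.2 hpz
  · exact dist_pos.2 (Ne.symm hzx)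
  · exact dist_pos.2 hzy
  · simpa [dist_comm] using dist_triangle x p z
  · linarith [dist_triangle p z x, (dist_comm z x : dist z x = dist x z)]
  · simpa [dist_comm] using dist_triangle p x z
  · linarith [dist_triangle z p y, (dist_comm z p : dist z p = dist p z)]
  · linarith [dist_triangle p z y, (dist_comm z y : dist z y = dist y z)]
  · simpa [dist_comm] using dist_triangle p y z
  · rw [hbetween]; simpa [dist_comm] using dist_triangle x p y
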